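/- Let K > 0 and let η : (0,∞)² → [0,∞) be a measurable function satisfying η(x,y) ≤ K·(x²+y²)^{−3/2} for all x, y > 0, let q : (0,∞) → (0,∞) be non-increasing, and let γ ≥ −2 be real. If there exists x₀ > 0 such that ∫_{x₀}^∞ (q(u))^{1−γ}·u^{−3} du < ∞, then ∫_0^∞ (q(u))^{1−γ}·η(u, q(u)) du < ∞. -/

import Mathlib

/-!
Since `(x² + y²)^{-3/2} ≤ min(x, y)^{-3}`, split the integral at `x₀`. On `(0, x₀]` the point
`(u, q u)` has height `q u ≥ q x₀`, so the integrand is at most `K q(u)^{-2-γ} ≤ K q(x₀)^{-2-γ}`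
(the exponent is `≤ 0` because `γ ≥ -2`), a bounded function on an interval of finite length.
On `(x₀, ∞)` the bound `η(u, q u) ≤ K u^{-3}` reduces the integral to the assumed one.
-/

open MeasureTheory Set

theorem Real.sq_add_sq_rpow_neg_half_le {x : ℝ} (hx : 0 < x) (y : ℝ) {p : ℝ} (hp : 0 ≤ p) :
    (x ^ 2 + y ^ 2) ^ (-p / 2) ≤ x ^ (-p) :=
  calc (x ^ 2 + y ^ 2) ^ (-p / 2)
      ≤ (x ^ 2) ^ (-p / 2) :=
        Real.rpow_le_rpow_of_nonpos (by positivity) (by nlinarith) (by linarith)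
    _ = x ^ (-p) := by
        rw [← Real.rpow_natCast x 2, ← Real.rpow_mul hx.le]
        ring_nf

section InverseCubeKernel

variable {K : ℝ} {η : ℝ × ℝ → ℝ} {x y : ℝ}

theorem le_mul_rpow_neg_three_left (hK : 0 ≤ K)
    (hηbd : ∀ x y : ℝ, 0 < x → 0 < y → η (x, y) ≤ K * (x ^ 2 + y ^ 2) ^ (-(3 : ℝ) / 2))
    (hx : 0 < x) (hy : 0 < y) : η (x, y) ≤ K * x ^ (-(3 : ℝ)) :=
  (hηbd x y hx hy).trans <|
    mul_le_mul_of_nonneg_left (Real.sq_add_sq_rpow_neg_half_le hx y (by norm_num)) hK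

theorem le_mul_rpow_neg_three_right (hK : 0 ≤ K)
    (hηbd : ∀ x y : ℝ, 0 < x → 0 < y → η (x, y) ≤ K * (x ^ 2 + y ^ 2) ^ (-(3 : ℝ) / 2))
    (hx : 0 < x) (hy : 0 < y) : η (x, y) ≤ K * y ^ (-(3 : ℝ)) := by
  refine (hηbd x y hx hy).trans <| mul_le_mul_of_nonneg_left ?_ hK
  rw [add_comm]
  exact Real.sq_add_sq_rpow_neg_half_le hy x (by norm_num)

variable {q : ℝ → ℝ} {γ x₀ : ℝ}

theorem setLIntegral_Ioc_rpow_mul_kernel_lt_top (hK : 0 ≤ K)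
    (hηbd : ∀ x y : ℝ, 0 < x → 0 < y → η (x, y) ≤ K * (x ^ 2 + y ^ 2) ^ (-(3 : ℝ) / 2))
    (hq : AntitoneOn q (Ioi 0)) (hqpos : ∀ x : ℝ, 0 < x → 0 < q x)
    (hγ : -2 ≤ γ) (hx₀ : 0 < x₀) :
    ∫⁻ u in Ioc 0 x₀, ENNReal.ofReal (q u ^ (1 - γ) * η (u, q u)) < ⊤ := by
  refine setLIntegral_lt_top_of_le_nnreal (by simp [Real.volume_Ioc])
    ⟨(K * q x₀ ^ (-2 - γ)).toNNReal, fun u ⟨hu0, hux₀⟩ ↦ ENNReal.ofReal_le_ofReal ?_⟩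
  have hqu : 0 < q u := hqpos u hu0
  calc q u ^ (1 - γ) * η (u, q u)
      ≤ q u ^ (1 - γ) * (K * q u ^ (-(3 : ℝ))) :=
        mul_le_mul_of_nonneg_left (le_mul_rpow_neg_three_right hK hηbd hu0 hqu)
          (Real.rpow_nonneg hqu.le _)
    _ = K * q u ^ (-2 - γ) := by
        rw [mul_left_comm, ← Real.rpow_add hqu]
        ring_nf
    _ ≤ K * q x₀ ^ (-2 - γ) :=
        mul_le_mul_of_nonneg_left (Real.rpow_le_rpow_of_nonpos (hqpos x₀ hx₀)
          (hq (mem_Ioi.2 hu0) (mem_Ioi.2 hx₀) hux₀) (by linarith)) hK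

theorem setLIntegral_Ioi_rpow_mul_kernel_le (hK : 0 ≤ K)
    (hηbd : ∀ x y : ℝ, 0 < x → 0 < y → η (x, y) ≤ K * (x ^ 2 + y ^ 2) ^ (-(3 : ℝ) / 2))
    (hqpos : ∀ x : ℝ, 0 < x → 0 < q x) (hx₀ : 0 < x₀) :
    ∫⁻ u in Ioi x₀, ENNReal.ofReal (q u ^ (1 - γ) * η (u, q u)) ≤
      ENNReal.ofReal K * ∫⁻ u in Ioi x₀, ENNReal.ofReal (q u ^ (1 - γ) * u ^ (-(3 : ℝ))) := by
  rw [← lintegral_const_mul' _ _ ENNReal.ofReal_ne_top]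
  refine setLIntegral_mono' measurableSet_Ioi fun u hu ↦ ?_
  have hu0 : 0 < u := hx₀.trans hu
  have hqu : 0 < q u := hqpos u hu0
  rw [← ENNReal.ofReal_mul hK]
  refine ENNReal.ofReal_le_ofReal ?_
  calc q u ^ (1 - γ) * η (u, q u)
      ≤ q u ^ (1 - γ) * (K * u ^ (-(3 : ℝ))) :=
        mul_le_mul_of_nonneg_left (le_mul_rpow_neg_three_left hK hηbd hu0 hqu)
          (Real.rpow_nonneg hqu.le _)
    _ = K * (q u ^ (1 - γ) * u ^ (-(3 : ℝ))) := by ring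

end InverseCubeKernel

theorem boundary_power_integral_finite_general
    (K : ℝ) (hK : 0 < K) (η : ℝ × ℝ → ℝ)
    (hηbd : ∀ x y : ℝ, 0 < x → 0 < y → η (x, y) ≤ K * (x ^ 2 + y ^ 2) ^ (-(3 : ℝ) / 2))
    (q : ℝ → ℝ) (hq : AntitoneOn q (Set.Ioi 0)) (hqpos : ∀ x : ℝ, 0 < x → 0 < q x)
    (γ : ℝ) (hγ : -2 ≤ γ)
    (hint : ∃ x₀ : ℝ, 0 < x₀ ∧
      (∫⁻ u in Set.Ioi x₀, ENNReal.ofReal (q u ^ (1 - γ) * u ^ (-(3 : ℝ)))) < ⊤) :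
    (∫⁻ u in Set.Ioi (0 : ℝ), ENNReal.ofReal (q u ^ (1 - γ) * η (u, q u))) < ⊤ := by
  obtain ⟨x₀, hx₀, hfin⟩ := hint
  rw [← Ioc_union_Ioi_eq_Ioi hx₀.le]
  refine (lintegral_union_le _ _ _).trans_lt <| ENNReal.add_lt_top.2 ⟨?_, ?_⟩
  · exact setLIntegral_Ioc_rpow_mul_kernel_lt_top hK.le hηbd hq hqpos hγ hx₀
  · exact (setLIntegral_Ioi_rpow_mul_kernel_le hK.le hηbd hqpos hx₀).trans_lt
      (ENNReal.mul_lt_top ENNReal.ofReal_lt_top hfin)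

/-- Finiteness of `∫_0^∞ (q(u))^{1-γ} η(u, q(u)) du` for a density `η` bounded by
`K (x²+y²)^{-3/2}`, a non-increasing `q : (0,∞) → (0,∞)` and `γ ≥ -2`, given
integrability of `(q(u))^{1-γ} u^{-3}` at infinity. -/
theorem boundary_power_integral_finite
    (K : ℝ) (hK : 0 < K) (η : ℝ × ℝ → ℝ) (hηmeas : Measurable η)
    (hηpos : ∀ x y : ℝ, 0 < x → 0 < y → 0 ≤ η (x, y))
    (hηbd : ∀ x y : ℝ, 0 < x → 0 < y → η (x, y) ≤ K * (x ^ 2 + y ^ 2) ^ (-(3 : ℝ) / 2))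
    (q : ℝ → ℝ) (hq : AntitoneOn q (Set.Ioi 0)) (hqpos : ∀ x : ℝ, 0 < x → 0 < q x)
    (γ : ℝ) (hγ : -2 ≤ γ)
    (hint : ∃ x₀ : ℝ, 0 < x₀ ∧
      (∫⁻ u in Set.Ioi x₀, ENNReal.ofReal (q u ^ (1 - γ) * u ^ (-(3 : ℝ)))) < ⊤) :
    (∫⁻ u in Set.Ioi (0 : ℝ), ENNReal.ofReal (q u ^ (1 - γ) * η (u, q u))) < ⊤ :=
  boundary_power_integral_finite_general K hK η hηbd q hq hqpos γ hγ hint
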